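/- arXiv:1101.5374 — 3 statements merged into one kernel-verified Lean document; each statement's English description precedes it below -/
import Mathlib

section
/- If a bivariate polynomial p(x,y) of degree at most n = 2k+1 in each variable satisfies ∂_x^{α1} ∂_y^{α2} p(q1, q2) = 0 for all (q1,q2) ∈ {0,1}^2 and (α1,α2) ∈ {0,...,k}^2, then p is identically zero. -/
/-!
In one variable, vanishing of the derivatives of order `≤ k` at `0` and at `1` makes both
points roots of multiplicity `≥ k + 1`, which a nonzero polynomial of degree `≤ 2k + 1`
cannot afford. For the tensor problem, fix `q₂` and `α₂ ≤ k`: `x ↦ ∂_y^{α₂} p(x, q₂)` is a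
polynomial of degree `≤ 2k + 1` in `x` whose derivatives of order `≤ k` vanish at `0` and `1`,
so it is zero. Hence for each fixed `x`, `y ↦ p(x, y)` satisfies the univariate conditions
and vanishes too.
-/

open Finset Polynomial

namespace Polynomial

theorem iteratedDeriv_eval {𝕜 : Type*} [NontriviallyNormedField 𝕜] (p : 𝕜[X]) (n : ℕ) :
    iteratedDeriv n (fun x => p.eval x) = fun x => (derivative^[n] p).eval x := by
  induction n generalizing p with
  | zero => simp
  | succ n ih =>
    ext x
    rw [iteratedDeriv_succ, ih, Polynomial.deriv, Function.iterate_succ_apply']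

theorem eq_zero_of_natDegree_le_of_iterate_derivative_eval_eq_zero {K : Type*} [Field K]
    [CharZero K] {p : K[X]} {k : ℕ} {a b : K} (hab : a ≠ b)
    (hdeg : p.natDegree ≤ 2 * k + 1) (ha : ∀ m ≤ k, (derivative^[m] p).eval a = 0)
    (hb : ∀ m ≤ k, (derivative^[m] p).eval b = 0) : p = 0 := by
  by_contra hp
  have hdvd : ∀ t, (∀ m ≤ k, (derivative^[m] p).eval t = 0) → (X - C t) ^ (k + 1) ∣ p :=
    fun t ht =>
      (le_rootMultiplicity_iff hp).1 (lt_rootMultiplicity_of_isRoot_iterate_derivative hp ht)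
  have hcop : IsCoprime ((X - C a) ^ (k + 1)) ((X - C b) ^ (k + 1)) :=
    (isCoprime_X_sub_C_of_isUnit_sub (sub_ne_zero.2 hab).isUnit).pow
  have hle := natDegree_le_of_dvd (hcop.mul_dvd (hdvd a ha) (hdvd b hb)) hp
  rw [natDegree_mul (by simp [X_sub_C_ne_zero]) (by simp [X_sub_C_ne_zero])] at hle
  simp only [natDegree_pow, natDegree_X_sub_C] at hle
  omega

theorem natDegree_sum_range_C_mul_X_pow_le {R : Type*} [Semiring R] (n : ℕ) (c : ℕ → R) :
    (∑ i ∈ range (n + 1), C (c i) * X ^ i).natDegree ≤ n :=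
  natDegree_sum_le_of_forall_le _ _ fun _ hi =>
    (natDegree_C_mul_X_pow_le _ _).trans (Nat.lt_succ_iff.1 (mem_range.1 hi))

end Polynomial

theorem Finset.sum_sum_mul_pow_mul_pow {R : Type*} [CommSemiring R] (s t : Finset ℕ)
    (c : ℕ → ℕ → R) (x y : R) :
    ∑ i ∈ s, ∑ j ∈ t, c i j * x ^ i * y ^ j = ∑ j ∈ t, (∑ i ∈ s, c i j * x ^ i) * y ^ j := by
  simp_rw [sum_mul]
  exact sum_comm

variable {𝕜 : Type*} [NontriviallyNormedField 𝕜]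

theorem iteratedDeriv_sum_mul_pow (s : Finset ℕ) (c : ℕ → 𝕜) (n : ℕ) (x : 𝕜) :
    iteratedDeriv n (fun y => ∑ j ∈ s, c j * y ^ j) x =
      ∑ j ∈ s, c j * iteratedDeriv n (· ^ j) x := by
  rw [iteratedDeriv_fun_sum fun j _ => by fun_prop]
  simp_rw [iteratedDeriv_const_mul_field]

theorem iteratedDeriv_sum_sum_mul_pow_mul_pow (s t : Finset ℕ) (c : ℕ → ℕ → 𝕜) (n : ℕ)
    (x q : 𝕜) :
    iteratedDeriv n (fun y => ∑ i ∈ s, ∑ j ∈ t, c i j * x ^ i * y ^ j) q =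
      ∑ i ∈ s, (∑ j ∈ t, c i j * iteratedDeriv n (· ^ j) q) * x ^ i := by
  simp_rw [sum_sum_mul_pow_mul_pow, iteratedDeriv_sum_mul_pow, sum_mul]
  rw [sum_comm]
  exact sum_congr rfl fun _ _ => sum_congr rfl fun _ _ => by ring

theorem sum_range_mul_pow_eq_zero_of_iteratedDeriv_eq_zero [CharZero 𝕜] {k : ℕ}
    {c : ℕ → 𝕜} {a b : 𝕜} (hab : a ≠ b)
    (ha : ∀ m ≤ k, iteratedDeriv m (fun x => ∑ i ∈ range (2 * k + 2), c i * x ^ i) a = 0)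
    (hb : ∀ m ≤ k, iteratedDeriv m (fun x => ∑ i ∈ range (2 * k + 2), c i * x ^ i) b = 0)
    (x : 𝕜) : ∑ i ∈ range (2 * k + 2), c i * x ^ i = 0 := by
  set p : 𝕜[X] := ∑ i ∈ range (2 * k + 2), C (c i) * X ^ i
  have hp : (fun x => ∑ i ∈ range (2 * k + 2), c i * x ^ i) = fun x => p.eval x := by
    simp [p, eval_finsetSum]
  simp_rw [hp, iteratedDeriv_eval] at ha hb
  have hp0 : p = 0 :=
    eq_zero_of_natDegree_le_of_iterate_derivative_eval_eq_zero hab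
      (natDegree_sum_range_C_mul_X_pow_le (2 * k + 1) c) ha hb
  rw [congrFun hp x, hp0, eval_zero]

/-- Uniqueness for the bivariate tensor Hermite interpolation problem: if a bivariate
polynomial of degree at most `n = 2k+1` in each variable has all mixed partial derivatives
`∂_x^{α₁}∂_y^{α₂}` with `α₁, α₂ ≤ k` vanishing at the four vertices of the unit square,
then it vanishes identically. -/
theorem bivariate_hermite_uniqueness (k : ℕ) (c : ℕ → ℕ → ℝ) (f : ℝ → ℝ → ℝ)
    (hf : ∀ x y : ℝ, f x y =
      ∑ i ∈ range (2 * k + 2), ∑ j ∈ range (2 * k + 2), c i j * x ^ i * y ^ j)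
    (hdata : ∀ q1 q2 : Fin 2, ∀ α1 ≤ k, ∀ α2 ≤ k,
      iteratedDeriv α1 (fun x => iteratedDeriv α2 (fun y => f x y) (q2 : ℝ)) (q1 : ℝ) = 0) :
    ∀ x y : ℝ, f x y = 0 := by
  have hrow : ∀ x, (fun y => f x y) =
      fun y => ∑ j ∈ range (2 * k + 2), (∑ i ∈ range (2 * k + 2), c i j * x ^ i) * y ^ j :=
    fun x => funext fun y => (hf x y).trans (sum_sum_mul_pow_mul_pow _ _ c x y)
  have hcol : ∀ α (q : ℝ), (fun x => iteratedDeriv α (fun y => f x y) q) = fun x =>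
      ∑ i ∈ range (2 * k + 2),
        (∑ j ∈ range (2 * k + 2), c i j * iteratedDeriv α (· ^ j) q) * x ^ i :=
    fun α q => funext fun x => by
      simp_rw [hf]
      exact iteratedDeriv_sum_sum_mul_pow_mul_pow _ _ c α x q
  have hpartial : ∀ q2 : Fin 2, ∀ α2 ≤ k, ∀ x,
      iteratedDeriv α2 (fun y => f x y) (q2 : ℝ) = 0 := by
    intro q2 α2 hα2 x
    rw [congrFun (hcol α2 q2) x]
    refine sum_range_mul_pow_eq_zero_of_iteratedDeriv_eq_zero zero_ne_one ?_ ?_ x <;>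
      intro α1 hα1 <;> rw [← hcol]
    · simpa using hdata 0 q2 α1 hα1 α2 hα2
    · simpa using hdata 1 q2 α1 hα1 α2 hα2
  intro x y
  rw [congrFun (hrow x) y]
  refine sum_range_mul_pow_eq_zero_of_iteratedDeriv_eq_zero zero_ne_one ?_ ?_ y <;>
    intro α hα <;> rw [← hrow]
  · simpa using hpartial 0 α hα x
  · simpa using hpartial 1 α hα x
end

section
/- Let φ be a C^{n+1} function on the interval [0,h] and let H be its degree-n Hermite interpolant matching φ^{(α)}(0) and φ^{(α)}(h) for 0 ≤ α ≤ k, where n = 2k+1. Then for all x ∈ [0,h] and 0 ≤ s ≤ n, |H^{(s)}(x) − φ^{(s)}(x)| ≤ C·h^{n+1−s}, where C depends only on k and on the supremum of |φ^{(n+1)}| on [0,h]. -/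
/-!
Let `e = H - φ`. Its derivatives of order `≤ k` vanish at both endpoints, so by repeated use of
Rolle's theorem `e^{(s)}` has at least `min s (2k+2-s)` zeros inside `(0,h)`: while `s ≤ k` the
endpoints contribute two extra zeros at each step, afterwards each differentiation loses one.
Hence every `e^{(s)}` with `s ≤ 2k+1` vanishes somewhere in `[0,h]`, and since
`e^{(2k+2)} = -φ^{(2k+2)}` is bounded by `M`, the mean value theorem applied downwards from
`s = 2k+2` gives `|e^{(s)}| ≤ M h^{2k+2-s}`.
-/

open Set Polynomial

theorem Polynomial.iteratedDeriv_eval_s7 {𝕜 : Type*} [NontriviallyNormedField 𝕜] (p : 𝕜[X])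
    (n : ℕ) : iteratedDeriv n (fun t => p.eval t) = fun t => (derivative^[n] p).eval t := by
  have hsemiconj : Function.Semiconj (fun (q : 𝕜[X]) t => q.eval t) derivative deriv :=
    fun q => by ext t; exact (q.deriv (x := t)).symm
  rw [iteratedDeriv_eq_iterate]
  exact (hsemiconj.iterate_right n p).symm

theorem iteratedDerivWithin_eval_sub {𝕜 : Type*} [NontriviallyNormedField 𝕜] {p : 𝕜[X]}
    {f : 𝕜 → 𝕜} {s : Set 𝕜} {n m : ℕ} (hs : UniqueDiffOn 𝕜 s) (hf : ContDiffOn 𝕜 n f s)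
    (hm : m ≤ n) {x : 𝕜} (hx : x ∈ s) :
    iteratedDerivWithin m (fun t => p.eval t - f t) s x =
      (derivative^[m] p).eval x - iteratedDerivWithin m f s x := by
  have hp : ContDiff 𝕜 m (fun t => p.eval t) := by simpa using p.contDiff_aeval (𝕜 := 𝕜) m
  rw [← Pi.sub_def, iteratedDerivWithin_sub hx hs hp.contDiffAt.contDiffWithinAt
      (hf.of_le (by exact_mod_cast hm) x hx),
    iteratedDerivWithin_eq_iteratedDeriv hs hp.contDiffAt hx, p.iteratedDeriv_eval_s7]

section Interval

variable {f : ℝ → ℝ} {a b : ℝ}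

theorem exists_finset_deriv_eq_zero (hf : ContinuousOn f (Icc a b)) (s : Finset ℝ)
    (hs : ∀ x ∈ s, x ∈ Icc a b ∧ f x = 0) :
    ∃ t : Finset ℝ, (∀ y ∈ t, y ∈ Ioo a b ∧ deriv f y = 0) ∧ s.card ≤ t.card + 1 := by
  have hrolle : ∀ x ∈ s, ∀ y ∈ s, x < y → ∃ c ∈ Ioo x y, deriv f c = 0 :=
    fun x hx y hy hxy => exists_deriv_eq_zero hxy
      (hf.mono (Icc_subset_Icc (hs x hx).1.1 (hs y hy).1.2)) (by rw [(hs x hx).2, (hs y hy).2])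
  choose! c hc hc0 using hrolle
  refine ⟨((s ×ˢ s).filter fun q => q.1 < q.2).image fun q => c q.1 q.2, ?_,
    Finset.card_le_of_interleaved fun x hx y hy hxy _ =>
      ⟨c x y, Finset.mem_image_of_mem (a := (x, y)) _ (by simp [hx, hy, hxy]), hc x hx y hy hxy⟩⟩
  simp only [Finset.mem_image, Finset.mem_filter, Finset.mem_product, Prod.exists]
  rintro _ ⟨x, y, ⟨⟨hx, hy⟩, hxy⟩, rfl⟩
  exact ⟨⟨(hs x hx).1.1.trans_lt (hc x hx y hy hxy).1,
    (hc x hx y hy hxy).2.trans_le (hs y hy).1.2⟩, hc0 x hx y hy hxy⟩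

theorem exists_finset_iteratedDerivWithin_eq_zero {n k : ℕ} (hab : a < b)
    (hf : ContDiffOn ℝ n f (Icc a b))
    (ha : ∀ j ≤ k, iteratedDerivWithin j f (Icc a b) a = 0)
    (hb : ∀ j ≤ k, iteratedDerivWithin j f (Icc a b) b = 0) :
    ∀ s ≤ n, s ≤ 2 * k + 1 → ∃ Z : Finset ℝ,
      (∀ z ∈ Z, z ∈ Ioo a b ∧ iteratedDerivWithin s f (Icc a b) z = 0) ∧
        min s (2 * k + 2 - s) ≤ Z.card := by
  intro s
  induction s with
  | zero => exact fun _ _ => ⟨∅, by simp, by simp⟩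
  | succ s ih =>
    intro hsn hsk
    obtain ⟨Z, hZ, hZcard⟩ := ih (by omega) (by omega)
    obtain ⟨W, hW, hWcard⟩ : ∃ W : Finset ℝ,
        (∀ x ∈ W, x ∈ Icc a b ∧ iteratedDerivWithin s f (Icc a b) x = 0) ∧
          min (s + 1) (2 * k + 1 - s) + 1 ≤ W.card := by
      by_cases hs : s ≤ k
      · have haZ : a ∉ insert b Z := by
          simp only [Finset.mem_insert, not_or]
          exact ⟨hab.ne, fun haZ => (hZ a haZ).1.1.false⟩
        have hbZ : b ∉ Z := fun hbZ => (hZ b hbZ).1.2.false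
        refine ⟨insert a (insert b Z), ?_, ?_⟩
        · simp only [Finset.mem_insert, forall_eq_or_imp]
          exact ⟨⟨left_mem_Icc.2 hab.le, ha s hs⟩, ⟨right_mem_Icc.2 hab.le, hb s hs⟩,
            fun z hz => ⟨Ioo_subset_Icc_self (hZ z hz).1, (hZ z hz).2⟩⟩
        · rw [Finset.card_insert_of_notMem haZ, Finset.card_insert_of_notMem hbZ]
          omega
      · exact ⟨Z, fun z hz => ⟨Ioo_subset_Icc_self (hZ z hz).1, (hZ z hz).2⟩, by omega⟩
    obtain ⟨T, hT, hTcard⟩ := exists_finset_deriv_eq_zero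
      (hf.continuousOn_iteratedDerivWithin (by exact_mod_cast (by omega : s ≤ n))
        (uniqueDiffOn_Icc hab)) W hW
    refine ⟨T, fun y hy => ⟨(hT y hy).1, ?_⟩, by omega⟩
    rw [iteratedDerivWithin_succ,
      derivWithin_of_mem_nhds (Icc_mem_nhds (hT y hy).1.1 (hT y hy).1.2)]
    exact (hT y hy).2

theorem exists_mem_Icc_iteratedDerivWithin_eq_zero {n k s : ℕ} (hab : a < b)
    (hf : ContDiffOn ℝ n f (Icc a b))
    (ha : ∀ j ≤ k, iteratedDerivWithin j f (Icc a b) a = 0)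
    (hb : ∀ j ≤ k, iteratedDerivWithin j f (Icc a b) b = 0) (hsn : s ≤ n)
    (hsk : s ≤ 2 * k + 1) : ∃ ξ ∈ Icc a b, iteratedDerivWithin s f (Icc a b) ξ = 0 := by
  rcases Nat.eq_zero_or_pos s with rfl | hs
  · exact ⟨a, left_mem_Icc.2 hab.le, ha 0 (Nat.zero_le k)⟩
  obtain ⟨Z, hZ, hZcard⟩ :=
    exists_finset_iteratedDerivWithin_eq_zero hab hf ha hb s hsn hsk
  obtain ⟨z, hz⟩ := Finset.card_pos.1 (by omega : 0 < Z.card)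
  exact ⟨z, Ioo_subset_Icc_self (hZ z hz).1, (hZ z hz).2⟩

theorem abs_le_mul_of_abs_derivWithin_le {B ξ : ℝ} (hf : DifferentiableOn ℝ f (Icc a b))
    (hξ : ξ ∈ Icc a b) (hfξ : f ξ = 0) (hB : ∀ x ∈ Icc a b, |derivWithin f (Icc a b) x| ≤ B)
    {x : ℝ} (hx : x ∈ Icc a b) : |f x| ≤ B * (b - a) := by
  have hB0 : 0 ≤ B := (abs_nonneg _).trans (hB ξ hξ)
  calc |f x| = ‖f x - f ξ‖ := by rw [hfξ, sub_zero, Real.norm_eq_abs]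
    _ ≤ B * ‖x - ξ‖ := (convex_Icc a b).norm_image_sub_le_of_norm_derivWithin_le hf hB hξ hx
    _ ≤ B * (b - a) := by
      gcongr
      exact Real.dist_le_of_mem_Icc hx hξ

theorem abs_iteratedDerivWithin_le_of_exists_zero {n : ℕ} {M : ℝ} (hab : a < b)
    (hf : ContDiffOn ℝ n f (Icc a b))
    (hM : ∀ x ∈ Icc a b, |iteratedDerivWithin n f (Icc a b) x| ≤ M)
    (hzero : ∀ s < n, ∃ ξ ∈ Icc a b, iteratedDerivWithin s f (Icc a b) ξ = 0) :
    ∀ s ≤ n, ∀ x ∈ Icc a b, |iteratedDerivWithin s f (Icc a b) x| ≤ M * (b - a) ^ (n - s) := by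
  suffices ∀ d s, s + d = n → ∀ x ∈ Icc a b,
      |iteratedDerivWithin s f (Icc a b) x| ≤ M * (b - a) ^ d from
    fun s hs => this (n - s) s (by omega)
  intro d
  induction d with
  | zero =>
    rintro s rfl
    simpa using hM
  | succ d ih =>
    intro s hs x hx
    obtain ⟨ξ, hξ, hξ0⟩ := hzero s (by omega)
    have hdiff := hf.differentiableOn_iteratedDerivWithin
      (by exact_mod_cast (by omega : s < n)) (uniqueDiffOn_Icc hab)
    rw [pow_succ, ← mul_assoc]
    refine abs_le_mul_of_abs_derivWithin_le hdiff hξ hξ0 (fun y hy => ?_) hx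
    rw [← iteratedDerivWithin_succ]
    exact ih (s + 1) (by omega) y hy

end Interval

/-- One-dimensional Hermite interpolation error estimate. For each `k`, there is a constant
`C M` depending only on `k` and a bound `M` for the `(n+1)`-st derivative (with `n = 2k+1`)
such that: for every interval `[0,h]`, every `C^{n+1}` function `φ` on `[0,h]` whose
`(n+1)`-st derivative is bounded by `M`, and its Hermite interpolant `H` (degree ≤ `n`,
matching derivatives of orders `0,…,k` at the endpoints), all derivatives of order `s ≤ n`
of the error are `O(h^{n+1-s})`. -/
theorem hermite_interpolation_error (k : ℕ) :
    ∃ C : ℝ → ℝ, ∀ h : ℝ, 0 < h → ∀ φ : ℝ → ℝ,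
      ContDiffOn ℝ (2 * k + 2 : ℕ) φ (Set.Icc 0 h) →
      ∀ M : ℝ, (∀ x ∈ Set.Icc (0 : ℝ) h,
          |iteratedDerivWithin (2 * k + 2) φ (Set.Icc 0 h) x| ≤ M) →
      ∀ H : Polynomial ℝ, H.natDegree ≤ 2 * k + 1 →
      (∀ α ≤ k, iteratedDeriv α (fun t => H.eval t) 0 =
          iteratedDerivWithin α φ (Set.Icc 0 h) 0) →
      (∀ α ≤ k, iteratedDeriv α (fun t => H.eval t) h =
          iteratedDerivWithin α φ (Set.Icc 0 h) h) →
      ∀ x ∈ Set.Icc (0 : ℝ) h, ∀ s ≤ 2 * k + 1,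
        |iteratedDeriv s (fun t => H.eval t) x - iteratedDerivWithin s φ (Set.Icc 0 h) x| ≤
          C M * h ^ (2 * k + 2 - s) := by
  refine ⟨id, fun h hh φ hφ M hM H hdeg hH0 hHh x hx s hs => ?_⟩
  set e : ℝ → ℝ := fun t => H.eval t - φ t
  have he : ∀ j ≤ 2 * k + 2, ∀ y ∈ Icc 0 h, iteratedDerivWithin j e (Icc 0 h) y =
      iteratedDeriv j (fun t => H.eval t) y - iteratedDerivWithin j φ (Icc 0 h) y :=
    fun j hj y hy => by
      rw [iteratedDerivWithin_eval_sub (uniqueDiffOn_Icc hh) hφ hj hy, H.iteratedDeriv_eval_s7]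
  have hec : ContDiffOn ℝ (2 * k + 2 : ℕ) e (Icc 0 h) := by
    simpa using ((H.contDiff_aeval (𝕜 := ℝ) _).contDiffOn).sub hφ
  have hea : ∀ j ≤ k, iteratedDerivWithin j e (Icc 0 h) 0 = 0 := fun j hj => by
    rw [he j (by omega) 0 (left_mem_Icc.2 hh.le), hH0 j hj, sub_self]
  have heb : ∀ j ≤ k, iteratedDerivWithin j e (Icc 0 h) h = 0 := fun j hj => by
    rw [he j (by omega) h (right_mem_Icc.2 hh.le), hHh j hj, sub_self]
  have heM : ∀ y ∈ Icc 0 h, |iteratedDerivWithin (2 * k + 2) e (Icc 0 h) y| ≤ M := fun y hy => by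
    rw [he _ le_rfl y hy, H.iteratedDeriv_eval_s7,
      iterate_derivative_eq_zero (hdeg.trans_lt (Nat.lt_succ_self _))]
    simpa using hM y hy
  have bound := abs_iteratedDerivWithin_le_of_exists_zero hh hec heM
    (fun j hj => exists_mem_Icc_iteratedDerivWithin_eq_zero hh hec hea heb hj.le (by omega))
    s (by omega) x hx
  rwa [he s (by omega) x hx, sub_zero] at bound
end

section
/- Let Q = [0,1]^2, let φ be a smooth function on Q with ∂_x^{α1}∂_y^{α2}φ vanishing at all four vertices for all (α1,α2) ∈ {0,...,k}^2 (zero Hermite data), and let H be a bivariate polynomial of degree ≤ 2k+1 in each variable. Then ∫∫_Q (∂_x^{k+1}∂_y^{k+1} H)(x,y) · (∂_x^{k+1}∂_y^{k+1} φ)(x,y) dx dy = 0. -/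
open Finset
open intervalIntegral

noncomputable def pd (v : ℝ × ℝ) (F : ℝ × ℝ → ℝ) : ℝ × ℝ → ℝ := fun p => fderiv ℝ F p v

-- from t1
lemma pd_contDiff {F : ℝ × ℝ → ℝ} (hF : ContDiff ℝ (⊤ : ℕ∞) F) (v : ℝ × ℝ) :
    ContDiff ℝ (⊤ : ℕ∞) (pd v F) := by
  have h1 : ContDiff ℝ (⊤ : ℕ∞) (fderiv ℝ F) := (contDiff_infty_iff_fderiv.mp hF).2
  exact (ContinuousLinearMap.apply ℝ ℝ v).contDiff.comp h1

lemma pd_iter_contDiff {F : ℝ × ℝ → ℝ} (hF : ContDiff ℝ (⊤ : ℕ∞) F) (v : ℝ × ℝ) (n : ℕ) :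
    ContDiff ℝ (⊤ : ℕ∞) ((pd v)^[n] F) := by
  induction n generalizing F with
  | zero => exact hF
  | succ n ih =>
    rw [Function.iterate_succ_apply]
    exact ih (pd_contDiff hF v)

-- slice derivative
lemma hasDerivAt_sliceY {F : ℝ × ℝ → ℝ} (hF : ContDiff ℝ (⊤ : ℕ∞) F) (x y : ℝ) :
    HasDerivAt (fun y' => F (x, y')) (pd (0,1) F (x,y)) y := by
  have h1 : HasDerivAt (fun y' : ℝ => ((x, y') : ℝ × ℝ)) ((0:ℝ),(1:ℝ)) y :=
    (hasDerivAt_const y x).prodMk (hasDerivAt_id y)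
  exact ((hF.differentiable (by simp)) (x,y)).hasFDerivAt.comp_hasDerivAt y h1

lemma hasDerivAt_sliceX {F : ℝ × ℝ → ℝ} (hF : ContDiff ℝ (⊤ : ℕ∞) F) (x y : ℝ) :
    HasDerivAt (fun x' => F (x', y)) (pd (1,0) F (x,y)) x := by
  have h1 : HasDerivAt (fun x' : ℝ => ((x', y) : ℝ × ℝ)) ((1:ℝ),(0:ℝ)) x :=
    (hasDerivAt_id x).prodMk (hasDerivAt_const x y)
  exact ((hF.differentiable (by simp)) (x,y)).hasFDerivAt.comp_hasDerivAt x h1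

lemma sliceY_iteratedDeriv {F : ℝ × ℝ → ℝ} (hF : ContDiff ℝ (⊤ : ℕ∞) F) (n : ℕ) (x y : ℝ) :
    iteratedDeriv n (fun y' => F (x, y')) y = (pd (0,1))^[n] F (x,y) := by
  induction n generalizing F with
  | zero => simp
  | succ n ih =>
    rw [iteratedDeriv_succ']
    have hd : deriv (fun y' => F (x, y')) = fun y' => pd (0,1) F (x, y') :=
      funext fun y' => (hasDerivAt_sliceY hF x y').deriv
    rw [hd, ih (pd_contDiff hF _), Function.iterate_succ_apply]

lemma sliceX_iteratedDeriv {F : ℝ × ℝ → ℝ} (hF : ContDiff ℝ (⊤ : ℕ∞) F) (n : ℕ) (x y : ℝ) :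
    iteratedDeriv n (fun x' => F (x', y)) x = (pd (1,0))^[n] F (x,y) := by
  induction n generalizing F with
  | zero => simp
  | succ n ih =>
    rw [iteratedDeriv_succ']
    have hd : deriv (fun x' => F (x', y)) = fun x' => pd (1,0) F (x', y) :=
      funext fun x' => (hasDerivAt_sliceX hF x' y).deriv
    rw [hd, ih (pd_contDiff hF _), Function.iterate_succ_apply]

lemma pd_apply_snd {F : ℝ × ℝ → ℝ} (hF : ContDiff ℝ (⊤ : ℕ∞) F) (v w : ℝ × ℝ) (p : ℝ × ℝ) :
    pd v (pd w F) p = fderiv ℝ (fderiv ℝ F) p v w := by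
  have hdf : DifferentiableAt ℝ (fderiv ℝ F) p :=
    ((contDiff_infty_iff_fderiv.mp hF).2.differentiable (by simp)) p
  have : pd w F = fun q => (ContinuousLinearMap.apply ℝ ℝ w) (fderiv ℝ F q) := rfl
  have h2 := ((ContinuousLinearMap.apply ℝ ℝ w).hasFDerivAt.comp p hdf.hasFDerivAt).fderiv
  calc pd v (pd w F) p = fderiv ℝ (fun q => (ContinuousLinearMap.apply ℝ ℝ w) (fderiv ℝ F q)) p v := rfl
    _ = fderiv ℝ (fderiv ℝ F) p v w := by
        rw [show (fun q => (ContinuousLinearMap.apply ℝ ℝ w) (fderiv ℝ F q)) = (ContinuousLinearMap.apply ℝ ℝ w) ∘ (fderiv ℝ F) from rfl, h2]; rfl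

lemma pd_comm {F : ℝ × ℝ → ℝ} (hF : ContDiff ℝ (⊤ : ℕ∞) F) (v w : ℝ × ℝ) (p : ℝ × ℝ) :
    pd v (pd w F) p = pd w (pd v F) p := by
  rw [pd_apply_snd hF, pd_apply_snd hF]
  exact (hF.contDiffAt.isSymmSndFDerivAt (by rw [minSmoothness_of_isRCLikeNormedField]; exact WithTop.coe_le_coe.mpr (le_top : (2:ℕ∞) ≤ ⊤))) v w

lemma pd_comm_iter {F : ℝ × ℝ → ℝ} (hF : ContDiff ℝ (⊤ : ℕ∞) F) (v w : ℝ × ℝ) (n : ℕ) (p : ℝ × ℝ) :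
    pd v ((pd w)^[n] F) p = (pd w)^[n] (pd v F) p := by
  induction n generalizing F with
  | zero => rfl
  | succ n ih =>
    rw [Function.iterate_succ_apply, ih (pd_contDiff hF w),
      show pd v (pd w F) = pd w (pd v F) from funext (pd_comm hF v w),
      ← Function.iterate_succ_apply]

lemma pd_iter_comm {F : ℝ × ℝ → ℝ} (hF : ContDiff ℝ (⊤ : ℕ∞) F) (v w : ℝ × ℝ) (m n : ℕ) (p : ℝ × ℝ) :
    (pd v)^[m] ((pd w)^[n] F) p = (pd w)^[n] ((pd v)^[m] F) p := by
  induction m generalizing F p with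
  | zero => rfl
  | succ m ih =>
    rw [Function.iterate_succ_apply,
      show pd v ((pd w)^[n] F) = (pd w)^[n] (pd v F) from funext (pd_comm_iter hF v w n),
      ih (pd_contDiff hF v), ← Function.iterate_succ_apply]

-- smoothness of deriv, continuity of iteratedDeriv
lemma deriv_smooth {f : ℝ → ℝ} (hf : ContDiff ℝ (⊤ : ℕ∞) f) : ContDiff ℝ (⊤ : ℕ∞) (deriv f) :=
  (contDiff_infty_iff_deriv.mp hf).2

lemma iteratedDeriv_smooth {f : ℝ → ℝ} (hf : ContDiff ℝ (⊤ : ℕ∞) f) (n : ℕ) :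
    ContDiff ℝ (⊤ : ℕ∞) (iteratedDeriv n f) := by
  induction n with
  | zero => simpa using hf
  | succ n ih => rw [iteratedDeriv_succ]; exact deriv_smooth ih

lemma iteratedDeriv_finset_sum {ι : Type*} (s : Finset ι) (f : ι → ℝ → ℝ)
    (h : ∀ i ∈ s, ContDiff ℝ (⊤ : ℕ∞) (f i)) (n : ℕ) (x : ℝ) :
    iteratedDeriv n (fun t => ∑ i ∈ s, f i t) x = ∑ i ∈ s, iteratedDeriv n (f i) x := by
  induction n generalizing f with
  | zero => simp
  | succ n ih =>
    rw [iteratedDeriv_succ']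
    have hd : deriv (fun t => ∑ i ∈ s, f i t) = fun t => ∑ i ∈ s, deriv (f i) t := by
      funext t
      exact deriv_fun_sum fun i hi =>
        ((h i hi).differentiable (by simp)).differentiableAt
    rw [hd, ih (fun i => deriv (f i)) (fun i hi => deriv_smooth (h i hi))]
    exact Finset.sum_congr rfl fun i hi => by rw [iteratedDeriv_succ']

lemma iteratedDeriv_cmul {f : ℝ → ℝ} (hf : ContDiff ℝ (⊤ : ℕ∞) f) (c : ℝ) (n : ℕ) (x : ℝ) :
    iteratedDeriv n (fun t => c * f t) x = c * iteratedDeriv n f x := by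
  rw [← iteratedDerivWithin_univ, ← iteratedDerivWithin_univ]
  exact iteratedDerivWithin_const_mul (Set.mem_univ x) uniqueDiffOn_univ c
    (hf.contDiffWithinAt.of_le (by exact_mod_cast (le_top : (n:ℕ∞) ≤ ⊤)))

lemma iteratedDeriv_zero_fun (n : ℕ) (x : ℝ) : iteratedDeriv n (fun _ : ℝ => (0:ℝ)) x = 0 := by
  induction n generalizing x with
  | zero => simp
  | succ n ih =>
    rw [iteratedDeriv_succ', show deriv (fun _ : ℝ => (0:ℝ)) = fun _ : ℝ => (0:ℝ) from funext fun t => deriv_const t 0]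
    exact ih x

lemma iteratedDeriv_pow_eq_zero {i n : ℕ} (h : i < n) (x : ℝ) :
    iteratedDeriv n (fun t : ℝ => t ^ i) x = 0 := by
  induction i generalizing n x with
  | zero =>
    obtain ⟨m, rfl⟩ := Nat.exists_eq_succ_of_ne_zero (by omega : n ≠ 0)
    rw [iteratedDeriv_succ']
    have : deriv (fun t : ℝ => t ^ 0) = fun _ : ℝ => (0:ℝ) := by
      funext t; simp
    rw [this]
    exact iteratedDeriv_zero_fun m x
  | succ i ih =>
    obtain ⟨m, rfl⟩ := Nat.exists_eq_succ_of_ne_zero (by omega : n ≠ 0)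
    rw [iteratedDeriv_succ']
    have : deriv (fun t : ℝ => t ^ (i+1)) = fun t : ℝ => ((i:ℝ)+1) * t ^ i := by
      funext t; rw [deriv_pow_field, Nat.add_sub_cancel]; push_cast; ring
    rw [this, iteratedDeriv_cmul (f := fun t => t ^ i) (contDiff_id.pow i) _ _ x,
      ih (by omega), mul_zero]
lemma ibp (n : ℕ) (g f : ℝ → ℝ) (hg : ContDiff ℝ (⊤ : ℕ∞) g) (hf : ContDiff ℝ (⊤ : ℕ∞) f) :
    ∫ t in (0:ℝ)..1, g t * iteratedDeriv (n+1) f t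
      = (∑ j ∈ range (n+1), (-1:ℝ)^j *
          (iteratedDeriv j g 1 * iteratedDeriv (n-j) f 1
            - iteratedDeriv j g 0 * iteratedDeriv (n-j) f 0))
        + (-1:ℝ)^(n+1) * ∫ t in (0:ℝ)..1, iteratedDeriv (n+1) g t * f t := by
  induction n generalizing g f with
  | zero =>
    have h := integral_mul_deriv_eq_deriv_mul_of_hasDerivAt (a := (0:ℝ)) (b := 1)
      (u := g) (v := f) (u' := deriv g) (v' := deriv f)
      ((hg.continuous).continuousOn) ((hf.continuous).continuousOn)
      (fun x _ => ((hg.differentiable (by simp)) x).hasDerivAt)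
      (fun x _ => ((hf.differentiable (by simp)) x).hasDerivAt)
      ((hg.continuous_deriv (by exact_mod_cast le_top)).intervalIntegrable 0 1)
      ((hf.continuous_deriv (by exact_mod_cast le_top)).intervalIntegrable 0 1)
    norm_num [iteratedDeriv_one, iteratedDeriv_zero, Finset.sum_range_one]
    rw [h]; ring
  | succ n ih =>
    have hstep : ∫ t in (0:ℝ)..1, g t * iteratedDeriv (n+2) f t
        = g 1 * iteratedDeriv (n+1) f 1 - g 0 * iteratedDeriv (n+1) f 0
          - ∫ t in (0:ℝ)..1, deriv g t * iteratedDeriv (n+1) f t :=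
      integral_mul_deriv_eq_deriv_mul_of_hasDerivAt (a := (0:ℝ)) (b := 1)
        (u := g) (v := iteratedDeriv (n+1) f) (u' := deriv g) (v' := iteratedDeriv (n+2) f)
        ((hg.continuous).continuousOn)
        (((iteratedDeriv_smooth hf (n+1)).continuous).continuousOn)
        (fun x _ => ((hg.differentiable (by simp)) x).hasDerivAt)
        (fun x _ => by
          have := (((iteratedDeriv_smooth hf (n+1)).differentiable
            (by simp)) x).hasDerivAt
          rwa [← iteratedDeriv_succ] at this)
        ((hg.continuous_deriv (by exact_mod_cast le_top)).intervalIntegrable 0 1)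
        (((iteratedDeriv_smooth hf (n+2)).continuous).intervalIntegrable 0 1)
    have hg' : ∀ j, iteratedDeriv j (deriv g) = iteratedDeriv (j+1) g :=
      fun j => by rw [iteratedDeriv_succ']
    have hR : ∑ j ∈ range (n+2), (-1:ℝ)^j *
          (iteratedDeriv j g 1 * iteratedDeriv (n+1-j) f 1
            - iteratedDeriv j g 0 * iteratedDeriv (n+1-j) f 0)
        = (g 1 * iteratedDeriv (n+1) f 1 - g 0 * iteratedDeriv (n+1) f 0)
          - ∑ j ∈ range (n+1), (-1:ℝ)^j *
            (iteratedDeriv (j+1) g 1 * iteratedDeriv (n-j) f 1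
              - iteratedDeriv (j+1) g 0 * iteratedDeriv (n-j) f 0) := by
      rw [Finset.sum_range_succ' (fun j => (-1:ℝ)^j *
          (iteratedDeriv j g 1 * iteratedDeriv (n+1-j) f 1
            - iteratedDeriv j g 0 * iteratedDeriv (n+1-j) f 0)) (n+1)]
      simp only [Nat.succ_sub_succ, pow_zero, one_mul, iteratedDeriv_zero, Nat.sub_zero]
      rw [show ∑ j ∈ range (n+1), (-1:ℝ)^(j+1) *
          (iteratedDeriv (j+1) g 1 * iteratedDeriv (n-j) f 1
            - iteratedDeriv (j+1) g 0 * iteratedDeriv (n-j) f 0)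
        = -∑ j ∈ range (n+1), (-1:ℝ)^j *
          (iteratedDeriv (j+1) g 1 * iteratedDeriv (n-j) f 1
            - iteratedDeriv (j+1) g 0 * iteratedDeriv (n-j) f 0) from by
        rw [← Finset.sum_neg_distrib]
        exact Finset.sum_congr rfl fun j _ => by ring]
      ring
    rw [show n+1+1 = n+2 from rfl, hstep, ih (deriv g) f (deriv_smooth hg) hf, hR]
    simp only [hg']
    ring

lemma ortho (k : ℕ) (g f : ℝ → ℝ) (hg : ContDiff ℝ (⊤ : ℕ∞) g) (hf : ContDiff ℝ (⊤ : ℕ∞) f)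
    (hgk : ∀ t, iteratedDeriv (k+1) g t = 0)
    (hf0 : ∀ j, j ≤ k → iteratedDeriv j f 0 = 0)
    (hf1 : ∀ j, j ≤ k → iteratedDeriv j f 1 = 0) :
    ∫ t in (0:ℝ)..1, g t * iteratedDeriv (k+1) f t = 0 := by
  rw [ibp k g f hg hf]
  rw [Finset.sum_eq_zero (fun j hj => by
    have hjk : k - j ≤ k := Nat.sub_le k j
    rw [hf0 _ hjk, hf1 _ hjk]
    ring)]
  have : ∫ t in (0:ℝ)..1, iteratedDeriv (k+1) g t * f t = 0 := by
    simp_rw [hgk, zero_mul]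
    simp
  rw [this]
  ring

lemma poly_vanish (N : ℕ) (b : ℕ → ℝ) (t : ℝ) :
    iteratedDeriv N (fun s : ℝ => ∑ j ∈ range N, b j * s^j) t = 0 := by
  rw [iteratedDeriv_finset_sum (range N) (fun j t => b j * t^j) (fun j _ => by exact contDiff_const.mul (contDiff_id.pow j)) N t]
  exact Finset.sum_eq_zero fun j hj => by
    rw [iteratedDeriv_cmul (f := fun t => t^j) (contDiff_id.pow j) _ N t,
      iteratedDeriv_pow_eq_zero (mem_range.mp hj), mul_zero]

lemma Hslice_deriv (N n : ℕ) (c : ℕ → ℕ → ℝ) (u w : ℝ) :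
    iteratedDeriv n (fun s => ∑ i ∈ range N, ∑ j ∈ range N, c i j * s^i * w^j) u
      = ∑ j ∈ range N, (∑ i ∈ range N, c i j * iteratedDeriv n (fun t => t^i) u) * w^j := by
  have h1 : (fun s : ℝ => ∑ i ∈ range N, ∑ j ∈ range N, c i j * s^i * w^j)
      = fun s => ∑ i ∈ range N, (∑ j ∈ range N, c i j * w^j) * s^i := by
    funext s
    refine Finset.sum_congr rfl fun i _ => ?_
    rw [Finset.sum_mul]
    exact Finset.sum_congr rfl fun j _ => by ring
  rw [h1, iteratedDeriv_finset_sum (range N) (fun i s => (∑ j ∈ range N, c i j * w^j) * s^i)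
      (fun i _ => by exact contDiff_const.mul (contDiff_id.pow i)) n u,
    Finset.sum_congr rfl (fun i _ =>
      iteratedDeriv_cmul (f := fun t => t^i) (contDiff_id.pow i) _ n u)]
  simp_rw [Finset.sum_mul]
  rw [Finset.sum_comm]
  exact Finset.sum_congr rfl fun j _ => Finset.sum_congr rfl fun i _ => by ring

section Core

variable {k : ℕ} {F G : ℝ × ℝ → ℝ}

lemma slice_contDiff {F : ℝ × ℝ → ℝ} (hF : ContDiff ℝ (⊤ : ℕ∞) F) (x : ℝ) :
    ContDiff ℝ (⊤ : ℕ∞) (fun y => F (x, y)) :=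
  hF.comp (contDiff_const.prodMk contDiff_id)

lemma sliceX_contDiff {F : ℝ × ℝ → ℝ} (hF : ContDiff ℝ (⊤ : ℕ∞) F) (q : ℝ) :
    ContDiff ℝ (⊤ : ℕ∞) (fun x => F (x, q)) :=
  hF.comp (contDiff_id.prodMk contDiff_const)

lemma core (k : ℕ) (F G : ℝ × ℝ → ℝ)
    (hF : ContDiff ℝ (⊤ : ℕ∞) F) (hG : ContDiff ℝ (⊤ : ℕ∞) G)
    (hGy : ∀ x y : ℝ, (pd (0,1))^[2*k+2] ((pd (1,0))^[k+1] G) (x,y) = 0)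
    (hGx : ∀ (m : ℕ) (x y : ℝ), (pd (1,0))^[2*k+2] ((pd (0,1))^[m] G) (x,y) = 0)
    (hFz : ∀ a b : ℕ, a ≤ k → b ≤ k → ∀ q1 q2 : ℝ,
      (q1 = 0 ∨ q1 = 1) → (q2 = 0 ∨ q2 = 1) →
      (pd (1,0))^[a] ((pd (0,1))^[b] F) (q1,q2) = 0) :
    ∫ x in (0:ℝ)..1, ∫ y in (0:ℝ)..1,
      ((pd (1,0))^[k+1] ((pd (0,1))^[k+1] G) (x,y)) *
      ((pd (1,0))^[k+1] ((pd (0,1))^[k+1] F) (x,y)) = 0 := by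
  have hYG : ∀ n, ContDiff ℝ (⊤ : ℕ∞) ((pd (0,1))^[n] G) := fun n => pd_iter_contDiff hG _ n
  have hYF : ∀ n, ContDiff ℝ (⊤ : ℕ∞) ((pd (0,1))^[n] F) := fun n => pd_iter_contDiff hF _ n
  have hXF : ∀ n, ContDiff ℝ (⊤ : ℕ∞) ((pd (1,0))^[n] F) := fun n => pd_iter_contDiff hF _ n
  have hGmix : ∀ m n, ContDiff ℝ (⊤ : ℕ∞) ((pd (1,0))^[m] ((pd (0,1))^[n] G)) :=
    fun m n => pd_iter_contDiff (hYG n) _ m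
  have hFmix : ∀ m n, ContDiff ℝ (⊤ : ℕ∞) ((pd (0,1))^[m] ((pd (1,0))^[n] F)) :=
    fun m n => pd_iter_contDiff (hXF n) _ m
  -- the per-boundary integral vanishing
  have main_q : ∀ (j : ℕ), j ≤ k → ∀ q : ℝ, (q = 0 ∨ q = 1) →
      (∫ x in (0:ℝ)..1, (pd (1,0))^[k+1] ((pd (0,1))^[j+(k+1)] G) (x,q) *
        (pd (0,1))^[k-j] ((pd (1,0))^[k+1] F) (x,q)) = 0 := by
    intro j hj q hq
    have hg' : ContDiff ℝ (⊤ : ℕ∞) (fun x => (pd (1,0))^[k+1] ((pd (0,1))^[j+(k+1)] G) (x,q)) :=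
      sliceX_contDiff (hGmix (k+1) (j+(k+1))) q
    have hf' : ContDiff ℝ (⊤ : ℕ∞) (fun x => (pd (0,1))^[k-j] F (x,q)) :=
      sliceX_contDiff (hYF (k-j)) q
    have hV : ∀ x : ℝ, (pd (0,1))^[k-j] ((pd (1,0))^[k+1] F) (x,q)
        = iteratedDeriv (k+1) (fun x' => (pd (0,1))^[k-j] F (x',q)) x := by
      intro x
      rw [sliceX_iteratedDeriv (hYF (k-j)) (k+1) x q, pd_iter_comm hF (0,1) (1,0) (k-j) (k+1)]
    simp only [hV]
    refine ortho k (fun x => (pd (1,0))^[k+1] ((pd (0,1))^[j+(k+1)] G) (x,q))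
      (fun x' => (pd (0,1))^[k-j] F (x',q)) hg' hf' ?_ ?_ ?_
    · intro t
      rw [sliceX_iteratedDeriv (hGmix (k+1) (j+(k+1))) (k+1) t q,
        ← Function.iterate_add_apply (pd (1,0)) (k+1) (k+1) ((pd (0,1))^[j+(k+1)] G),
        show (k+1)+(k+1) = 2*k+2 from by ring]
      exact hGx (j+(k+1)) t q
    · intro j' hj'
      rw [sliceX_iteratedDeriv (hYF (k-j)) j' 0 q]
      exact hFz j' (k-j) hj' (Nat.sub_le k j) 0 q (Or.inl rfl) hq
    · intro j' hj'
      rw [sliceX_iteratedDeriv (hYF (k-j)) j' 1 q]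
      exact hFz j' (k-j) hj' (Nat.sub_le k j) 1 q (Or.inr rfl) hq
  -- inner integral via integration by parts in y
  have key_inner : ∀ x : ℝ,
      (∫ y in (0:ℝ)..1, ((pd (1,0))^[k+1] ((pd (0,1))^[k+1] G) (x,y)) *
        ((pd (1,0))^[k+1] ((pd (0,1))^[k+1] F) (x,y)))
      = ∑ j ∈ range (k+1), (-1:ℝ)^j *
          ((pd (1,0))^[k+1] ((pd (0,1))^[j+(k+1)] G) (x,1) *
            (pd (0,1))^[k-j] ((pd (1,0))^[k+1] F) (x,1)
          - (pd (1,0))^[k+1] ((pd (0,1))^[j+(k+1)] G) (x,0) *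
            (pd (0,1))^[k-j] ((pd (1,0))^[k+1] F) (x,0)) := by
    intro x
    have hg : ContDiff ℝ (⊤ : ℕ∞) (fun y => (pd (1,0))^[k+1] ((pd (0,1))^[k+1] G) (x,y)) :=
      slice_contDiff (hGmix (k+1) (k+1)) x
    have hf : ContDiff ℝ (⊤ : ℕ∞) (fun y => (pd (1,0))^[k+1] F (x,y)) :=
      slice_contDiff (hXF (k+1)) x
    have hfd : ∀ y : ℝ, iteratedDeriv (k+1) (fun y' => (pd (1,0))^[k+1] F (x,y')) y
        = (pd (1,0))^[k+1] ((pd (0,1))^[k+1] F) (x,y) := by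
      intro y
      rw [sliceY_iteratedDeriv (hXF (k+1)) (k+1) x y,
        pd_iter_comm hF (0,1) (1,0) (k+1) (k+1)]
    simp only [← hfd]
    rw [ibp k (fun y' => (pd (1,0))^[k+1] ((pd (0,1))^[k+1] G) (x,y'))
      (fun y' => (pd (1,0))^[k+1] F (x,y')) hg hf]
    have hgj : ∀ (j : ℕ) (q : ℝ),
        iteratedDeriv j (fun y' => (pd (1,0))^[k+1] ((pd (0,1))^[k+1] G) (x,y')) q
          = (pd (1,0))^[k+1] ((pd (0,1))^[j+(k+1)] G) (x,q) := by
      intro j q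
      rw [sliceY_iteratedDeriv (hGmix (k+1) (k+1)) j x q,
        pd_iter_comm (hYG (k+1)) (0,1) (1,0) j (k+1),
        ← Function.iterate_add_apply (pd (0,1)) j (k+1) G]
    have hfj : ∀ (j : ℕ) (q : ℝ),
        iteratedDeriv (k-j) (fun y' => (pd (1,0))^[k+1] F (x,y')) q
          = (pd (0,1))^[k-j] ((pd (1,0))^[k+1] F) (x,q) :=
      fun j q => sliceY_iteratedDeriv (hXF (k+1)) (k-j) x q
    have hzero3 : ∀ t : ℝ, (pd (1,0))^[k+1] ((pd (0,1))^[k+1+(k+1)] G) (x,t) = 0 := by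
      intro t
      rw [show k+1+(k+1) = 2*k+2 from by ring, pd_iter_comm hG (1,0) (0,1) (k+1) (2*k+2)]
      exact hGy x t
    simp only [hgj, hfj]
    simp_rw [hzero3, zero_mul, intervalIntegral.integral_zero, mul_zero, add_zero]
  simp only [key_inner]
  have hcont : ∀ (j : ℕ) (q : ℝ), Continuous (fun x =>
      (pd (1,0))^[k+1] ((pd (0,1))^[j+(k+1)] G) (x,q) *
      (pd (0,1))^[k-j] ((pd (1,0))^[k+1] F) (x,q)) := by
    intro j q
    exact (((hGmix (k+1) (j+(k+1))).continuous).comp (continuous_id.prodMk continuous_const)).mul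
      (((hFmix (k-j) (k+1)).continuous).comp (continuous_id.prodMk continuous_const))
  rw [intervalIntegral.integral_finset_sum (fun j _ => by
    exact ((continuous_const.mul ((hcont j 1).sub (hcont j 0))).intervalIntegrable 0 1))]
  refine Finset.sum_eq_zero fun j hj => ?_
  rw [intervalIntegral.integral_const_mul,
    intervalIntegral.integral_sub ((hcont j 1).intervalIntegrable 0 1)
      ((hcont j 0).intervalIntegrable 0 1),
    main_q j (Nat.lt_succ_iff.mp (mem_range.mp hj)) 1 (Or.inr rfl),
    main_q j (Nat.lt_succ_iff.mp (mem_range.mp hj)) 0 (Or.inl rfl)]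
  ring

end Core



/-- Two-dimensional orthogonality lemma: if `φ` is a smooth function on the unit square
with zero Hermite vertex data (all mixed partials `∂_x^{α₁}∂_y^{α₂}` with `α₁,α₂ ≤ k`
vanish at the four vertices), and `H` is a bivariate polynomial of degree ≤ `2k+1` in
each variable, then the mixed derivatives `∂_x^{k+1}∂_y^{k+1}` of `H` and `φ` are
`L²`-orthogonal over the unit square. -/
theorem bivariate_hermite_orthogonality (k : ℕ) (φ : ℝ → ℝ → ℝ)
    (hφ : ContDiff ℝ (⊤ : ℕ∞) (fun p : ℝ × ℝ => φ p.1 p.2))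
    (hzero : ∀ q1 q2 : Fin 2, ∀ α1 ≤ k, ∀ α2 ≤ k,
      iteratedDeriv α1 (fun x => iteratedDeriv α2 (fun y => φ x y) (q2 : ℝ)) (q1 : ℝ) = 0)
    (c : ℕ → ℕ → ℝ) (H : ℝ → ℝ → ℝ)
    (hH : ∀ x y : ℝ, H x y =
      ∑ i ∈ range (2 * k + 2), ∑ j ∈ range (2 * k + 2), c i j * x ^ i * y ^ j) :
    ∫ x in (0 : ℝ)..1, ∫ y in (0 : ℝ)..1,
      (iteratedDeriv (k + 1) (fun x' => iteratedDeriv (k + 1) (fun y' => H x' y') y) x) *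
      (iteratedDeriv (k + 1) (fun x' => iteratedDeriv (k + 1) (fun y' => φ x' y') y) x)
        = 0 := by
  have hΦ : ContDiff ℝ (⊤ : ℕ∞) (fun p : ℝ × ℝ => φ p.1 p.2) := hφ.of_le (by simp)
  have hΨ : ContDiff ℝ (⊤ : ℕ∞) (fun p : ℝ × ℝ => H p.1 p.2) := by
    have h : (fun p : ℝ × ℝ => H p.1 p.2)
        = fun p : ℝ × ℝ => ∑ i ∈ range (2*k+2), ∑ j ∈ range (2*k+2), c i j * p.1^i * p.2^j :=
      funext fun p => hH p.1 p.2
    rw [h]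
    exact ContDiff.sum fun i _ => ContDiff.sum fun j _ =>
      (contDiff_const.mul (contDiff_fst.pow i)).mul (contDiff_snd.pow j)
  -- rewrite mixed iterated derivatives as pd-iterates
  have hF4 : ∀ x y : ℝ,
      iteratedDeriv (k+1) (fun x' => iteratedDeriv (k+1) (fun y' => φ x' y') y) x
        = (pd (1,0))^[k+1] ((pd (0,1))^[k+1] (fun p : ℝ × ℝ => φ p.1 p.2)) (x,y) := by
    intro x y
    have h1 : (fun x' => iteratedDeriv (k+1) (fun y' => φ x' y') y)
        = fun x' => (pd (0,1))^[k+1] (fun p : ℝ × ℝ => φ p.1 p.2) (x', y) :=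
      funext fun x' => sliceY_iteratedDeriv hΦ (k+1) x' y
    rw [h1]
    exact sliceX_iteratedDeriv (pd_iter_contDiff hΦ _ (k+1)) (k+1) x y
  have hG4 : ∀ x y : ℝ,
      iteratedDeriv (k+1) (fun x' => iteratedDeriv (k+1) (fun y' => H x' y') y) x
        = (pd (1,0))^[k+1] ((pd (0,1))^[k+1] (fun p : ℝ × ℝ => H p.1 p.2)) (x,y) := by
    intro x y
    have h1 : (fun x' => iteratedDeriv (k+1) (fun y' => H x' y') y)
        = fun x' => (pd (0,1))^[k+1] (fun p : ℝ × ℝ => H p.1 p.2) (x', y) :=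
      funext fun x' => sliceY_iteratedDeriv hΨ (k+1) x' y
    rw [h1]
    exact sliceX_iteratedDeriv (pd_iter_contDiff hΨ _ (k+1)) (k+1) x y
  -- vertex vanishing for φ
  have hFz : ∀ a b : ℕ, a ≤ k → b ≤ k → ∀ q1 q2 : ℝ,
      (q1 = 0 ∨ q1 = 1) → (q2 = 0 ∨ q2 = 1) →
      (pd (1,0))^[a] ((pd (0,1))^[b] (fun p : ℝ × ℝ => φ p.1 p.2)) (q1,q2) = 0 := by
    intro a b ha hb q1 q2 h1 h2
    have key : ∀ u v : Fin 2,
        (pd (1,0))^[a] ((pd (0,1))^[b] (fun p : ℝ × ℝ => φ p.1 p.2)) ((u:ℝ),(v:ℝ)) = 0 := by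
      intro u v
      have h0 := hzero u v a ha b hb
      rw [show (fun x => iteratedDeriv b (fun y => φ x y) ((v:ℝ)))
          = fun x => (pd (0,1))^[b] (fun p : ℝ × ℝ => φ p.1 p.2) (x,(v:ℝ)) from
          funext fun x => sliceY_iteratedDeriv hΦ b x _,
        sliceX_iteratedDeriv (pd_iter_contDiff hΦ _ b) a _ _] at h0
      exact h0
    rcases h1 with rfl|rfl <;> rcases h2 with rfl|rfl
    · simpa using key 0 0
    · simpa using key 0 1
    · simpa using key 1 0
    · simpa using key 1 1
  -- polynomial degree vanishing for H
  have hGy : ∀ x y : ℝ,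
      (pd (0,1))^[2*k+2] ((pd (1,0))^[k+1] (fun p : ℝ × ℝ => H p.1 p.2)) (x,y) = 0 := by
    intro x y
    rw [← sliceY_iteratedDeriv (pd_iter_contDiff hΨ _ (k+1)) (2*k+2) x y]
    have h2 : (fun y' => (pd (1,0))^[k+1] (fun p : ℝ × ℝ => H p.1 p.2) (x, y'))
        = fun y' => ∑ j ∈ range (2*k+2),
            (∑ i ∈ range (2*k+2), c i j * iteratedDeriv (k+1) (fun t => t^i) x) * y'^j := by
      funext y'
      rw [← sliceX_iteratedDeriv hΨ (k+1) x y']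
      have h3 : (fun x' => (fun p : ℝ × ℝ => H p.1 p.2) (x', y'))
          = fun s => ∑ i ∈ range (2*k+2), ∑ j ∈ range (2*k+2), c i j * s^i * y'^j :=
        funext fun s => hH s y'
      rw [h3, Hslice_deriv (2*k+2) (k+1) c x y']
    rw [h2]
    exact poly_vanish (2*k+2) _ y
  have hGx : ∀ (m : ℕ) (x y : ℝ),
      (pd (1,0))^[2*k+2] ((pd (0,1))^[m] (fun p : ℝ × ℝ => H p.1 p.2)) (x,y) = 0 := by
    intro m x y
    rw [← sliceX_iteratedDeriv (pd_iter_contDiff hΨ _ m) (2*k+2) x y]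
    have h2 : (fun x' => (pd (0,1))^[m] (fun p : ℝ × ℝ => H p.1 p.2) (x', y))
        = fun x' => ∑ i ∈ range (2*k+2),
            (∑ j ∈ range (2*k+2), c i j * iteratedDeriv m (fun t => t^j) y) * x'^i := by
      funext x'
      rw [← sliceY_iteratedDeriv hΨ m x' y]
      have h3 : (fun y' => (fun p : ℝ × ℝ => H p.1 p.2) (x', y'))
          = fun s => ∑ j ∈ range (2*k+2), ∑ i ∈ range (2*k+2), c i j * s^j * x'^i := by
        funext s
        rw [show (fun p : ℝ × ℝ => H p.1 p.2) (x', s) = H x' s from rfl, hH x' s,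
          Finset.sum_comm]
        exact Finset.sum_congr rfl fun j _ => Finset.sum_congr rfl fun i _ => by ring
      rw [h3, Hslice_deriv (2*k+2) m (fun j i => c i j) y x']
    rw [h2]
    exact poly_vanish (2*k+2) _ x
  simp only [hG4, hF4]
  exact core k (fun p : ℝ × ℝ => φ p.1 p.2) (fun p : ℝ × ℝ => H p.1 p.2) hΦ hΨ hGy hGx hFz
end
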